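/- In the group ring ℤB_n, for 1 ≤ k ≤ n, the product of additive 1-shuffles Ш_{1,n-1}·Ш_{1,n-2}···Ш_{1,n-k} equals Ш_{k,n-k}·(Σ_k)^{↑(n-k)}, where Σ_k is the braid symmetrizer (lift of ∑_{g∈S_k} g to ℤB_k). -/

import Mathlib

/-! The braid group `B_∞` (inductive limit of the Artin braid groups), its integral
group ring, the shift endomorphism `↑m`, and the braid shuffle elements `Ш_{m,n}`.
The generator `br i` represents the Artin generator `σ_{i+1}`. -/

/-- Relators of the Artin presentation of `B_∞`. -/
def braidRels : Set (FreeGroup ℕ) :=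
  {r | (∃ i : ℕ, r = .of i * .of (i + 1) * .of i * (.of (i + 1) * .of i * .of (i + 1))⁻¹) ∨
       (∃ i j : ℕ, i + 2 ≤ j ∧ r = .of i * .of j * (.of j * .of i)⁻¹)}

/-- The braid group `B_∞`. -/
abbrev BraidInf : Type := PresentedGroup braidRels

/-- The Artin generator `σ_{i+1}` of `B_∞`. -/
def br (i : ℕ) : BraidInf := PresentedGroup.of i

lemma braidRels_mk_eq_one {r : FreeGroup ℕ} (h : r ∈ braidRels) :
    PresentedGroup.mk braidRels r = 1 :=
  (QuotientGroup.eq_one_iff r).mpr (Subgroup.subset_normalClosure h)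

lemma br_braid (i : ℕ) : br i * br (i + 1) * br i = br (i + 1) * br i * br (i + 1) := by
  have h := braidRels_mk_eq_one (Or.inl ⟨i, rfl⟩)
  rw [map_mul, map_mul, map_inv, map_mul, map_mul, mul_inv_eq_one] at h
  exact h

lemma br_comm {i j : ℕ} (hij : i + 2 ≤ j) : br i * br j = br j * br i := by
  have h := braidRels_mk_eq_one (Or.inr ⟨i, j, hij, rfl⟩)
  rw [map_mul, map_inv, map_mul, mul_inv_eq_one] at h
  exact h

/-- The shift endomorphism of `B_∞`, sending `σ_i` to `σ_{i+m}`. -/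
noncomputable def braidShift (m : ℕ) : BraidInf →* BraidInf :=
  PresentedGroup.toGroup (f := fun i => br (i + m)) (by
    rintro r (⟨i, rfl⟩ | ⟨i, j, hij, rfl⟩) <;>
      simp only [map_mul, map_inv, FreeGroup.lift_apply_of, mul_inv_eq_one]
    · rw [show i + 1 + m = i + m + 1 from by omega]
      exact br_braid (i + m)
    · exact br_comm (by omega))

/-- The descending word `σ_{b+k+1} σ_{b+k} ⋯ σ_{b+1}` (in 1-based notation):
`br (b+k) * br (b+k-1) * ⋯ * br b`. -/
def descWord : ℕ → ℕ → BraidInf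
  | 0, b => br b
  | k + 1, b => br (b + k + 1) * descWord k b

/-- The braid shuffle elements `Ш_{m,n} ∈ ℤB_∞`, defined by the Pascal-type recurrence
`Ш_{m,n} = Ш_{m-1,n} + Ш_{m,n-1}·σ_{m+n-1}⋯σ_n` with `Ш_{0,n} = Ш_{n,0} = 1`. -/
noncomputable def Sha : ℕ → ℕ → MonoidAlgebra ℤ BraidInf
  | 0, _ => 1
  | _ + 1, 0 => 1
  | m + 1, n + 1 =>
      Sha m (n + 1) + Sha (m + 1) n * MonoidAlgebra.of ℤ BraidInf (descWord m n)

/-- The shift `↑m` on the group ring `ℤB_∞`. -/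
noncomputable def ringShift (m : ℕ) :
    MonoidAlgebra ℤ BraidInf →+* MonoidAlgebra ℤ BraidInf :=
  MonoidAlgebra.mapDomainRingHom ℤ (braidShift m)


/-- The braid symmetrizers `Σ_k ∈ ℤB_∞` (lifts of `∑_{g ∈ S_k} g`), via
`Σ_0 = Σ_1 = 1` and `Σ_{k+1} = Ш_{1,k}·Σ_k` (the case `n = 1` of
`Σ_{m+n} = Ш_{n,m}·Σ_m·(Σ_n)^{↑m}`). -/
noncomputable def SymBraid : ℕ → MonoidAlgebra ℤ BraidInf
  | 0 => 1
  | k + 1 => Sha 1 k * SymBraid k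

-- === aux ===
noncomputable abbrev ι : BraidInf → MonoidAlgebra ℤ BraidInf := MonoidAlgebra.of ℤ BraidInf

lemma braidShift_br (m i : ℕ) : braidShift m (br i) = br (i + m) :=
  PresentedGroup.toGroup.of _

lemma ringShift_of (m : ℕ) (g : BraidInf) : ringShift m (ι g) = ι (braidShift m g) := by
  simp [ringShift, MonoidAlgebra.mapDomainRingHom, ι, MonoidAlgebra.of_apply,
    Finsupp.mapDomain_single]

lemma braidShift_zero (g : BraidInf) : braidShift 0 g = g := by
  have : braidShift 0 = MonoidHom.id _ := PresentedGroup.ext fun i => braidShift_br 0 i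
  rw [this]; rfl

lemma ringShift_zero (x : MonoidAlgebra ℤ BraidInf) : ringShift 0 x = x := by
  show MonoidAlgebra.mapDomainRingHom ℤ (braidShift 0) x = x
  have h : ⇑(braidShift 0) = id := funext braidShift_zero
  simp [MonoidAlgebra.mapDomainRingHom, h, Finsupp.mapDomain_id, MonoidAlgebra.mapDomain]

lemma Sha_zl (n : ℕ) : Sha 0 n = 1 := by rw [Sha]
lemma Sha_zr (m : ℕ) : Sha (m+1) 0 = 1 := by rw [Sha]
lemma Sha_succ (m n : ℕ) : Sha (m+1) (n+1) = Sha m (n+1) + Sha (m+1) n * ι (descWord m n) := by rw [Sha]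

lemma descWord_comm (k b j : ℕ) (h : b + k + 2 ≤ j) :
    br j * descWord k b = descWord k b * br j := by
  induction k with
  | zero => exact (br_comm (by omega)).symm
  | succ k ih =>
    show br j * (br (b+k+1) * descWord k b) = (br (b+k+1) * descWord k b) * br j
    rw [← mul_assoc, (br_comm (show (b+k+1)+2 ≤ j by omega)).symm, mul_assoc, ih (by omega),
      ← mul_assoc]

lemma br_descWord (k b i : ℕ) (h1 : b ≤ i) (h2 : i < b + k) :
    br i * descWord k b = descWord k b * br (i+1) := by
  induction k with
  | zero => omega
  | succ k ih =>
    rcases Nat.lt_or_ge i (b+k) with h | h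
    · show br i * (br (b+k+1) * descWord k b) = (br (b+k+1) * descWord k b) * br (i+1)
      rw [← mul_assoc, br_comm (show i+2 ≤ b+k+1 by omega), mul_assoc, ih h, ← mul_assoc]
    · have hi : i = b + k := by omega
      subst hi
      cases k with
      | zero =>
        show br b * (br (b+1) * br b) = (br (b+1) * br b) * br (b+1)
        rw [← mul_assoc, br_braid]
      | succ k =>
        show br (b+k+1) * (br (b+k+1+1) * (br (b+k+1) * descWord k b))
          = (br (b+k+1+1) * (br (b+k+1) * descWord k b)) * br (b+k+1+1)
        rw [← mul_assoc, ← mul_assoc, br_braid (b+k+1), mul_assoc, mul_assoc,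
          descWord_comm k b (b+k+1+1) (by omega)]
        noncomm_ring

lemma Sha_comm_br : ∀ m n j : ℕ, m + n ≤ j →
    ι (br j) * Sha m n = Sha m n * ι (br j)
  | 0, n, j, h => by rw [Sha_zl, one_mul, mul_one]
  | m+1, 0, j, h => by rw [Sha_zr, one_mul, mul_one]
  | m+1, n+1, j, h => by
    rw [Sha_succ, mul_add, add_mul, Sha_comm_br m (n+1) j (by omega), ← mul_assoc,
      Sha_comm_br (m+1) n j (by omega), mul_assoc, mul_assoc, ← map_mul, ← map_mul,
      descWord_comm m n j (by omega)]

lemma shuffle_shift (K b : ℕ) : ∀ a, a ≤ K →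
    ι (descWord K b) * ringShift (b+1) (Sha 1 a) = ringShift b (Sha 1 a) * ι (descWord K b)
  | 0, _ => by
    show ι (descWord K b) * ringShift (b+1) (Sha 1 0) = ringShift b (Sha 1 0) * ι (descWord K b)
    rw [Sha_zr, map_one, map_one, one_mul, mul_one]
  | a+1, h => by
    have e : Sha 1 (a+1) = 1 + Sha 1 a * ι (br a) := by
      rw [Sha_succ, Sha_zl]; rfl
    rw [e, map_add, map_one, map_mul, map_add, map_one, map_mul, ringShift_of, ringShift_of,
      braidShift_br, braidShift_br, mul_add, mul_one, add_mul, one_mul]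
    congr 1
    rw [← mul_assoc, shuffle_shift K b a (by omega), mul_assoc, mul_assoc, ← map_mul, ← map_mul,
      show a + (b+1) = (a+b)+1 from by omega, ← br_descWord K b (a+b) (by omega) (by omega),
      show a + b = b + a from by omega]

lemma ι_mul (g h : BraidInf) : ι (g * h) = ι g * ι h := map_mul _ _ _

lemma Sha_one_zero : Sha 1 0 = 1 := Sha_zr 0

lemma exchange : ∀ a m : ℕ,
    Sha (a+1) m * ringShift m (Sha 1 a) = Sha 1 (m+a) * Sha a m
  | 0, m => by
    show Sha 1 m * ringShift m (Sha 1 0) = Sha 1 m * Sha 0 m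
    rw [Sha_one_zero, map_one, mul_one, Sha_zl, mul_one]
  | a+1, 0 => by
    simp only [Nat.zero_add]
    rw [Sha_zr (a+1), one_mul, ringShift_zero, Sha_zr a, mul_one]
  | a+1, m+1 => by
    have e2 : ringShift (m+1) (Sha 1 (a+1))
        = 1 + ringShift (m+1) (Sha 1 a) * ι (br (m+a+1)) := by
      have e : Sha 1 (a+1) = 1 + Sha 1 a * ι (br a) := by rw [Sha_succ, Sha_zl]; rfl
      rw [e, map_add, map_one, map_mul, ringShift_of, braidShift_br,
        show a + (m+1) = m+a+1 from by omega]
    have e3 : Sha 1 (m+1+(a+1)) = 1 + Sha 1 (m+a+1) * ι (br (m+a+1)) := by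
      have e : Sha 1 ((m+a+1)+1) = Sha 0 ((m+a+1)+1) + Sha 1 (m+a+1) * ι (descWord 0 (m+a+1)) :=
        Sha_succ 0 (m+a+1)
      rw [show m+1+(a+1) = (m+a+1)+1 from by omega, e, Sha_zl]; rfl
    have hw : descWord (a+1) m = br (m+a+1) * descWord a m := rfl
    have hA : Sha (a+1) (m+1) * ringShift (m+1) (Sha 1 a)
        = Sha 1 (m+a+1) * Sha a (m+1) := by
      rw [exchange a (m+1), show m+1+a = m+a+1 from by omega]
    have hB : Sha (a+2) m * ι (descWord (a+1) m) * ringShift (m+1) (Sha 1 (a+1))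
        = Sha 1 (m+a+1) * (ι (br (m+a+1)) * (Sha (a+1) m * ι (descWord a m))) := by
      rw [mul_assoc, shuffle_shift (a+1) m (a+1) le_rfl, ← mul_assoc,
        exchange (a+1) m, show m+(a+1) = m+a+1 from by omega, hw, ι_mul, mul_assoc]
      congr 1
      rw [← mul_assoc, ← Sha_comm_br (a+1) m (m+a+1) (by omega), mul_assoc]
    have key : Sha 1 (m+a+1) * ι (br (m+a+1)) * Sha (a+1) (m+1)
        = Sha (a+1) (m+1) * (ringShift (m+1) (Sha 1 a) * ι (br (m+a+1)))
          + Sha 1 (m+a+1) * (ι (br (m+a+1)) * (Sha (a+1) m * ι (descWord a m))) := by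
      conv_lhs => rw [Sha_succ a m]
      rw [mul_add]
      congr 1
      · rw [mul_assoc, Sha_comm_br a (m+1) (m+a+1) (by omega), ← mul_assoc, ← hA, mul_assoc]
      · rw [mul_assoc, ← mul_assoc (ι (br (m+a+1)))]
    rw [Sha_succ (a+1) m, add_mul, hB, e2, mul_add, mul_one, e3, add_mul, one_mul, key,
      add_assoc]

lemma stmt7_aux : ∀ k n : ℕ, 1 ≤ k → k ≤ n →
    ((List.range k).map fun j => Sha 1 (n - 1 - j)).prod =
      Sha k (n - k) * ringShift (n - k) (SymBraid k)
  | 0, _, hk, _ => by omega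
  | 1, n, _, hn => by
    have h1 : SymBraid 1 = 1 := by rw [SymBraid, SymBraid, Sha_one_zero, one_mul]
    have hr : List.range 1 = [0] := rfl
    simp only [hr, List.map_cons, List.map_nil, List.prod_cons, List.prod_nil,
      mul_one, Nat.sub_zero, h1, map_one]
  | k+2, n, _, hn => by
    rw [List.range_succ_eq_map]
    simp only [List.map_cons, List.prod_cons, List.map_map]
    have hf : ((fun j => Sha 1 (n - 1 - j)) ∘ Nat.succ) = fun j => Sha 1 (n - 1 - 1 - j) := by
      funext j
      simp only [Function.comp_apply]
      congr 1
      omega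
    rw [hf, stmt7_aux (k+1) (n-1) (by omega) (by omega),
      show n-1-(k+1) = n-(k+2) from by omega, Nat.sub_zero]
    have hs : SymBraid (k+2) = Sha 1 (k+1) * SymBraid (k+1) := by rw [SymBraid]
    rw [hs, map_mul, ← mul_assoc, ← mul_assoc]
    congr 1
    have h := exchange (k+1) (n-(k+2))
    rw [show n-(k+2)+(k+1) = n-1 from by omega] at h
    exact h.symm


/-- for `1 ≤ k ≤ n`,
`Ш_{1,n-1}·Ш_{1,n-2}⋯Ш_{1,n-k} = Ш_{k,n-k}·(Σ_k)^{↑(n-k)}`. -/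
theorem stmt_7 (n k : ℕ) (hk : 1 ≤ k) (hkn : k ≤ n) :
    ((List.range k).map fun j => Sha 1 (n - 1 - j)).prod =
      Sha k (n - k) * ringShift (n - k) (SymBraid k) :=
  stmt7_aux k n hk hkn
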